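/- arXiv:0909.1273 — 2 statements merged into one kernel-verified Lean document; each statement's English description precedes it below -/
import Mathlib

section
/- For every n ≥ 1, #Ξ_n = F_{n+2} + 1; equivalently, #(Θ_1 ∪ ⋯ ∪ Θ_n) = F_1 + F_2 + ⋯ + F_n = F_{n+2} − 1. -/
open Set Filter

/-- The mediant of two rationals (written in lowest terms). -/
def mediant (x y : ℚ) : ℚ :=
  ((x.num + y.num : ℤ) : ℚ) / ((x.den + y.den : ℕ) : ℚ)

/-- `x` and `y` are consecutive elements of the set `S`. -/
def IsConsecutive (S : Set ℚ) (x y : ℚ) : Prop :=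
  x ∈ S ∧ y ∈ S ∧ x < y ∧ ∀ z ∈ S, ¬ (x < z ∧ z < y)

/-- The Stern–Brocot sequences `ℱ_n`. -/
def sternBrocot : ℕ → Set ℚ
  | 0 => {0, 1}
  | n + 1 => sternBrocot n ∪
      {z | ∃ x y : ℚ, IsConsecutive (sternBrocot n) x y ∧ z = mediant x y}

/-- `Q_n`, the set of mediants newly inserted at step `n ≥ 1` of the
Stern–Brocot construction. -/
def newMediants (n : ℕ) : Set ℚ :=
  {z | ∃ x y : ℚ, IsConsecutive (sternBrocot (n - 1)) x y ∧ z = mediant x y}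

/-- Value of the regular continued fraction `[0; a_1, …, a_m]`. -/
def cfVal : List ℕ → ℚ
  | [] => 0
  | a :: t => 1 / ((a : ℚ) + cfVal t)

/-- `a` is the regular continued fraction expansion `[0; a_1, …, a_m]` of `x`,
with all partial quotients positive and the last one at least `2`. -/
def IsCF (x : ℚ) (a : List ℕ) : Prop :=
  (∀ ai ∈ a, 1 ≤ ai) ∧ 2 ≤ a.getLastD 0 ∧ x = cfVal a

/-- Value of `b_1 - 1/(b_2 - ⋯ - 1/b_l)` (using the convention `1/0 = 0`,
so that `rrTail [b] = b`). -/
def rrTail : List ℕ → ℚ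
  | [] => 0
  | b :: t => (b : ℚ) - 1 / rrTail t

/-- Value of the regular reduced continued fraction
`[[1; b_1, …, b_l]] = 1 - 1/(b_1 - 1/(b_2 - ⋯ - 1/b_l))`. -/
def rrcfVal (b : List ℕ) : ℚ := 1 - 1 / rrTail b

/-- `b` is the regular reduced continued fraction expansion
`[[1; b_1, …, b_l]]` of `x`, with all entries at least `2`. -/
def IsRRCF (x : ℚ) (b : List ℕ) : Prop :=
  (∀ bi ∈ b, 2 ≤ bi) ∧ x = rrcfVal b

/-- `Θ_k`: rationals in `(0,1)` whose regular reduced continued fraction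
expansion satisfies `L(x) = b_1 + ⋯ + b_l = k + 1`. -/
def Theta (k : ℕ) : Set ℚ :=
  {x | x ∈ Set.Ioo (0 : ℚ) 1 ∧ ∃ b : List ℕ, IsRRCF x b ∧ b.sum = k + 1}

/-- `Ξ_n = {0, 1} ∪ Θ_1 ∪ ⋯ ∪ Θ_n`. -/
def Xi (n : ℕ) : Set ℚ :=
  {0, 1} ∪ ⋃ k ∈ Finset.Icc 1 n, Theta k

/-!
Since `b_1 - 1/(b_2 - ⋯ - 1/b_l)` lies in `(b_1 - 1, b_1]` when all `b_i ≥ 2`, the expansion is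
recovered from its value one entry at a time. Hence `Θ_k` is in bijection with the compositions of
`k + 1` into parts `≥ 2`, and these number `F_k`: according as the first part is `2` or larger,
drop it or lower it by one, which gives the Fibonacci recursion.
Summing, `F_1 + ⋯ + F_n = F_{n+2} - 1`, and `Ξ_n` adds the two endpoints `0` and `1`.
-/

theorem List.modifyHead_injective {α : Type*} {f : α → α} (hf : Function.Injective f) :
    Function.Injective (List.modifyHead f)
  | [], [], _ => rfl
  | [], _ :: _, h => by simp at h
  | _ :: _, [], h => by simp at h
  | a :: s, a' :: s', h => by
    simp only [List.modifyHead_cons, List.cons.injEq, hf.eq_iff] at h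
    rw [h.1, h.2]

theorem two_le_sum_of_ne_nil {l : List ℕ} (hl : ∀ b ∈ l, 2 ≤ b) (hne : l ≠ []) : 2 ≤ l.sum := by
  obtain ⟨b, t, rfl⟩ := List.exists_cons_of_ne_nil hne
  have := hl b List.mem_cons_self
  rw [List.sum_cons]
  omega

def compositionsGeTwo : ℕ → Finset (List ℕ)
  | 0 => {[]}
  | 1 => ∅
  | m + 2 => (compositionsGeTwo m).image (2 :: ·) ∪
      (compositionsGeTwo (m + 1)).image (List.modifyHead (· + 1))

theorem mem_compositionsGeTwo :
    ∀ {m : ℕ} {l : List ℕ}, l ∈ compositionsGeTwo m ↔ (∀ b ∈ l, 2 ≤ b) ∧ l.sum = m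
  | 0, l => by
    rw [compositionsGeTwo, Finset.mem_singleton]
    constructor
    · rintro rfl
      simp
    · rintro ⟨hl, hsum⟩
      by_contra hne
      have := two_le_sum_of_ne_nil hl hne
      omega
  | 1, l => by
    simp only [compositionsGeTwo, Finset.notMem_empty, false_iff, not_and]
    intro hl hsum
    have := two_le_sum_of_ne_nil hl (by rintro rfl; simp at hsum)
    omega
  | m + 2, l => by
    simp only [compositionsGeTwo, Finset.mem_union, Finset.mem_image, mem_compositionsGeTwo]
    constructor
    · rintro (⟨t, ⟨ht, hsum⟩, rfl⟩ | ⟨t, ⟨ht, hsum⟩, rfl⟩)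
      · simp only [List.mem_cons, forall_eq_or_imp, List.sum_cons]
        exact ⟨⟨le_rfl, ht⟩, by omega⟩
      · obtain ⟨a, s, rfl⟩ := List.exists_cons_of_ne_nil (by rintro rfl; simp at hsum : t ≠ [])
        simp only [List.mem_cons, forall_eq_or_imp, List.sum_cons, List.modifyHead_cons] at ht hsum ⊢
        exact ⟨⟨by omega, ht.2⟩, by omega⟩
    · rintro ⟨hl, hsum⟩
      obtain ⟨b, t, rfl⟩ := List.exists_cons_of_ne_nil (by rintro rfl; simp at hsum : l ≠ [])
      simp only [List.mem_cons, forall_eq_or_imp, List.sum_cons] at hl hsum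
      obtain rfl | hb := hl.1.eq_or_lt
      · exact Or.inl ⟨t, ⟨hl.2, by omega⟩, rfl⟩
      · refine Or.inr ⟨(b - 1) :: t, ?_, ?_⟩
        · simp only [List.mem_cons, forall_eq_or_imp, List.sum_cons]
          exact ⟨⟨by omega, hl.2⟩, by omega⟩
        · rw [List.modifyHead_cons, Nat.sub_add_cancel (by omega)]

theorem card_compositionsGeTwo_add_two (m : ℕ) :
    (compositionsGeTwo (m + 2)).card =
      (compositionsGeTwo (m + 1)).card + (compositionsGeTwo m).card := by
  have hdisj : Disjoint ((compositionsGeTwo m).image (2 :: ·))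
      ((compositionsGeTwo (m + 1)).image (List.modifyHead (· + 1))) := by
    simp only [Finset.disjoint_left, Finset.mem_image, not_exists, not_and]
    rintro _ ⟨t, -, rfl⟩ l hl hlt
    obtain ⟨a, s, rfl⟩ := List.exists_cons_of_ne_nil
      (by rintro rfl; simp [mem_compositionsGeTwo] at hl : l ≠ [])
    have := (mem_compositionsGeTwo.1 hl).1 a List.mem_cons_self
    simp only [List.modifyHead_cons, List.cons.injEq] at hlt
    omega
  rw [compositionsGeTwo, Finset.card_union_of_disjoint hdisj,
    Finset.card_image_of_injective _ List.cons_injective,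
    Finset.card_image_of_injective _ (List.modifyHead_injective (add_left_injective 1)), add_comm]

theorem card_compositionsGeTwo_succ : ∀ m : ℕ, (compositionsGeTwo (m + 1)).card = Nat.fib m
  | 0 => rfl
  | 1 => card_compositionsGeTwo_add_two 0
  | m + 2 => by
    rw [card_compositionsGeTwo_add_two, card_compositionsGeTwo_succ (m + 1),
      card_compositionsGeTwo_succ m, Nat.fib_add_two, add_comm]

theorem sum_Icc_fib (n : ℕ) : ∑ k ∈ Finset.Icc 1 n, Nat.fib k = Nat.fib (n + 2) - 1 := by
  rw [Nat.fib_succ_eq_succ_sum (n + 1), Nat.add_sub_cancel, Finset.range_eq_Ico,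
    Finset.sum_eq_sum_Ico_succ_bot (by omega : 0 < n + 1), Nat.fib_zero, zero_add, zero_add,
    Finset.Ico_add_one_right_eq_Icc]

theorem one_lt_rrTail {l : List ℕ} (hl : ∀ b ∈ l, 2 ≤ b) (hne : l ≠ []) : 1 < rrTail l := by
  induction l with
  | nil => exact absurd rfl hne
  | cons b t ih =>
    have hb : (2 : ℚ) ≤ b := by exact_mod_cast hl b List.mem_cons_self
    have ht : ∀ c ∈ t, 2 ≤ c := fun c hc => hl c (List.mem_cons_of_mem b hc)
    have hu : 1 / rrTail t < 1 := by
      rcases eq_or_ne t [] with rfl | hne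
      · simp [rrTail]
      · have := ih ht hne
        exact (div_lt_one (by linarith)).2 this
    rw [rrTail]
    linarith

theorem one_div_rrTail_mem_Ico {l : List ℕ} (hl : ∀ b ∈ l, 2 ≤ b) :
    1 / rrTail l ∈ Set.Ico 0 1 := by
  rcases eq_or_ne l [] with rfl | hne
  · simp [rrTail]
  · have := one_lt_rrTail hl hne
    exact ⟨by positivity, (div_lt_one (by linarith)).2 this⟩

theorem rrTail_injOn : Set.InjOn rrTail {l : List ℕ | ∀ b ∈ l, 2 ≤ b} := by
  intro l hl l' hl' h
  induction l generalizing l' with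
  | nil =>
    cases l' with
    | nil => rfl
    | cons b' t' =>
      have := one_lt_rrTail hl' (List.cons_ne_nil b' t')
      rw [← h, rrTail] at this
      norm_num at this
  | cons b t ih =>
    cases l' with
    | nil =>
      have := one_lt_rrTail hl (List.cons_ne_nil b t)
      rw [h, rrTail] at this
      norm_num at this
    | cons b' t' =>
      have ht : ∀ c ∈ t, 2 ≤ c := fun c hc => hl c (List.mem_cons_of_mem b hc)
      have ht' : ∀ c ∈ t', 2 ≤ c := fun c hc => hl' c (List.mem_cons_of_mem b' hc)
      obtain ⟨hu₀, hu₁⟩ := one_div_rrTail_mem_Ico ht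
      obtain ⟨hu₀', hu₁'⟩ := one_div_rrTail_mem_Ico ht'
      rw [rrTail, rrTail] at h
      -- the entry `b` is the ceiling of `b - 1/rrTail t`
      have hb : b = b' := by
        have : (b : ℚ) < b' + 1 ∧ (b' : ℚ) < b + 1 := ⟨by linarith, by linarith⟩
        norm_cast at this
        omega
      subst hb
      rw [ih ht ht' (by simpa using h)]

theorem rrcfVal_injOn : Set.InjOn rrcfVal {l : List ℕ | ∀ b ∈ l, 2 ≤ b} :=
  fun _ hl _ hl' h => rrTail_injOn hl hl' (by simpa [rrcfVal] using h)

theorem rrcfVal_mem_Ioo {l : List ℕ} (hl : ∀ b ∈ l, 2 ≤ b) (hne : l ≠ []) :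
    rrcfVal l ∈ Set.Ioo 0 1 := by
  have := one_lt_rrTail hl hne
  have : 1 / rrTail l ∈ Set.Ioo 0 1 := ⟨by positivity, (div_lt_one (by linarith)).2 this⟩
  rw [rrcfVal]
  constructor <;> linarith [this.1, this.2]

theorem Theta_eq_image (k : ℕ) : Theta k = (compositionsGeTwo (k + 1)).image rrcfVal := by
  ext x
  simp only [Theta, IsRRCF, Finset.coe_image, Set.mem_image, Finset.mem_coe,
    mem_compositionsGeTwo]
  constructor
  · rintro ⟨-, b, ⟨hb, rfl⟩, hsum⟩
    exact ⟨b, ⟨hb, hsum⟩, rfl⟩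
  · rintro ⟨b, ⟨hb, hsum⟩, rfl⟩
    exact ⟨rrcfVal_mem_Ioo hb (by rintro rfl; simp at hsum), b, ⟨hb, rfl⟩, hsum⟩

theorem iUnion_Theta_eq_image (s : Finset ℕ) :
    ⋃ k ∈ s, Theta k = (s.biUnion fun k => compositionsGeTwo (k + 1)).image rrcfVal := by
  simp only [Theta_eq_image, Finset.coe_image, Finset.coe_biUnion, Finset.mem_coe, Set.image_iUnion₂]

theorem ncard_iUnion_Theta (s : Finset ℕ) :
    (⋃ k ∈ s, Theta k).ncard = ∑ k ∈ s, Nat.fib k := by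
  rw [iUnion_Theta_eq_image, Set.ncard_coe_finset, Finset.card_image_of_injOn, Finset.card_biUnion]
  · exact Finset.sum_congr rfl fun k _ => card_compositionsGeTwo_succ k
  · intro i _ j _ hij
    simp only [Function.onFun, Finset.disjoint_left, mem_compositionsGeTwo]
    intro l hi hj
    exact hij (by omega)
  · refine rrcfVal_injOn.mono fun l hl => ?_
    simp only [Finset.coe_biUnion, Set.mem_iUnion, Finset.mem_coe, mem_compositionsGeTwo] at hl
    obtain ⟨_, _, hl, _⟩ := hl
    exact hl

theorem ncard_Xi (n : ℕ) : (Xi n).ncard = (⋃ k ∈ Finset.Icc 1 n, Theta k).ncard + 2 := by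
  have hdisj : Disjoint ({0, 1} : Set ℚ) (⋃ k ∈ Finset.Icc 1 n, Theta k) := by
    simp only [Set.disjoint_left, Set.mem_insert_iff, Set.mem_singleton_iff, Set.mem_iUnion]
    rintro x (rfl | rfl) ⟨k, -, ⟨hx, -⟩⟩ <;> simp at hx
  have hfin : (⋃ k ∈ Finset.Icc 1 n, Theta k).Finite := by
    rw [iUnion_Theta_eq_image]
    exact Finset.finite_toSet _
  rw [Xi, Set.ncard_union_eq hdisj (Set.toFinite _) hfin, Set.ncard_pair zero_ne_one, add_comm]

/-- `#Ξ_n = F_{n+2} + 1`, equivalently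
`#(Θ_1 ∪ ⋯ ∪ Θ_n) = F_1 + ⋯ + F_n = F_{n+2} - 1`. -/
theorem ncard_Xi_eq_fib :
    ∀ n : ℕ, 1 ≤ n →
      (Xi n).ncard = Nat.fib (n + 2) + 1 ∧
      (⋃ k ∈ Finset.Icc 1 n, Theta k).ncard = ∑ k ∈ Finset.Icc 1 n, Nat.fib k ∧
      ∑ k ∈ Finset.Icc 1 n, Nat.fib k = Nat.fib (n + 2) - 1 := by
  intro n hn
  have hfib : 0 < Nat.fib (n + 2) := Nat.fib_pos.2 (by omega)
  refine ⟨?_, ncard_iUnion_Theta _, sum_Icc_fib n⟩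
  rw [ncard_Xi, ncard_iUnion_Theta, sum_Icc_fib]
  omega
end

section
/- For every λ ∈ (0,1), the Tichy–Uitz function g_λ, defined on the rationals in [0,1] by the mediant recursion, is strictly increasing on ℚ ∩ [0,1] and extends (uniquely) to a continuous increasing function from [0,1] onto [0,1]. -/
open Set Filter

/-!
Inserting mediants between neighbours, starting from `[0, 1]`, produces `ℱ_n` as a sorted list
whose neighbours are Farey pairs (`c b - a d = 1` for `a/b < c/d`). A fraction strictly between
Farey neighbours has denominator at least the sum of theirs, while the denominator sums of
neighbours in `ℱ_n` are at least `n + 2`; so every `q ∈ ℚ ∩ [0,1]` with `q.den ≤ n + 1` lies in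
`ℱ_n`. The recursion splits a gap `g y - g x` between neighbours into `λ (g y - g x)` and
`(1 - λ) (g y - g x)`, so along `ℱ_n` the values of `g` increase with gaps at most
`max λ (1 - λ) ^ n`. Hence `g` is strictly increasing with dense image in `[0,1]`, and its
supremum extension is monotone with dense range, hence continuous; it is onto by the intermediate
value theorem and unique because `ℚ ∩ [0,1]` is dense in `[0,1]`.
-/

namespace List

variable {α : Type*}

theorem IsChain.rel_of_infix {R : α → α → Prop} {l : List α} {x y : α} (h : IsChain R l)
    (hxy : [x, y] <:+: l) : R x y :=
  isChain_pair.mp (h.infix hxy)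

theorem pair_infix_cons_cons_iff {x y a b : α} {t : List α} :
    [x, y] <:+: a :: b :: t ↔ (x = a ∧ y = b) ∨ [x, y] <:+: b :: t := by
  simp [infix_cons_iff, cons_prefix_cons]

theorem not_pair_infix_singleton {x y a : α} : ¬ [x, y] <:+: [a] :=
  fun h => by simpa using h.length_le

def insertBetween (f : α → α → α) : List α → List α
  | x :: y :: t => x :: f x y :: insertBetween f (y :: t)
  | l => l

section insertBetween

variable (f : α → α → α)

@[simp]
theorem insertBetween_cons_cons (x y : α) (t : List α) :
    insertBetween f (x :: y :: t) = x :: f x y :: insertBetween f (y :: t) := rfl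

theorem insertBetween_cons (x : α) (t : List α) : ∃ r, insertBetween f (x :: t) = x :: r := by
  cases t <;> exact ⟨_, rfl⟩

theorem mem_insertBetween {z : α} :
    ∀ {l : List α}, z ∈ insertBetween f l ↔ z ∈ l ∨ ∃ x y, [x, y] <:+: l ∧ z = f x y
  | [] => by simp [insertBetween]
  | [a] => by simp [insertBetween, not_pair_infix_singleton]
  | a :: b :: t => by
    simp only [insertBetween_cons_cons, mem_cons, mem_insertBetween, pair_infix_cons_cons_iff]
    grind

theorem isChain_insertBetween {S : α → α → Prop} :
    ∀ {l : List α}, (∀ x y, [x, y] <:+: l → S x (f x y) ∧ S (f x y) y) →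
      IsChain S (insertBetween f l)
  | [], _ => isChain_nil
  | [a], _ => isChain_singleton a
  | a :: b :: t, h => by
    obtain ⟨r, hr⟩ := insertBetween_cons f b t
    have hab := h a b (pair_infix_cons_cons_iff.mpr (.inl ⟨rfl, rfl⟩))
    have htail : IsChain S (insertBetween f (b :: t)) := isChain_insertBetween fun x y hxy =>
      h x y (pair_infix_cons_cons_iff.mpr (.inr hxy))
    rw [hr] at htail
    rw [insertBetween_cons_cons, hr]
    exact isChain_cons_cons.mpr ⟨hab.1, isChain_cons_cons.mpr ⟨hab.2, htail⟩⟩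

theorem head?_insertBetween : ∀ l : List α, (insertBetween f l).head? = l.head?
  | [] | [_] | _ :: _ :: _ => rfl

theorem getLast?_insertBetween : ∀ l : List α, (insertBetween f l).getLast? = l.getLast?
  | [] | [_] => rfl
  | a :: b :: t => by
    obtain ⟨r, hr⟩ := insertBetween_cons f b t
    rw [insertBetween_cons_cons, hr, getLast?_cons_cons, getLast?_cons_cons, ← hr,
      getLast?_insertBetween, getLast?_cons_cons]

end insertBetween

theorem mem_or_exists_infix_lt_lt [LinearOrder α] {t : α} :
    ∀ {l : List α} {a b : α}, l.head? = some a → l.getLast? = some b → a ≤ t → t ≤ b →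
      t ∈ l ∨ ∃ x y, [x, y] <:+: l ∧ x < t ∧ t < y
  | [], _, _, ha, _, _, _ => by simp at ha
  | [c], a, b, ha, hb, hat, htb => by
    simp only [head?_cons, getLast?_singleton, Option.some.injEq] at ha hb
    subst ha hb
    exact .inl (by simp [le_antisymm htb hat])
  | c :: d :: l, a, b, ha, hb, hat, htb => by
    simp only [head?_cons, Option.some.injEq] at ha
    subst ha
    rcases hat.eq_or_lt with rfl | hct
    · exact .inl mem_cons_self
    rcases lt_or_ge t d with htd | hdt
    · exact .inr ⟨c, d, pair_infix_cons_cons_iff.mpr (.inl ⟨rfl, rfl⟩), hct, htd⟩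
    rw [getLast?_cons_cons] at hb
    rcases mem_or_exists_infix_lt_lt rfl hb hdt htb with h | ⟨x, y, hxy, h⟩
    · exact .inl (mem_cons_of_mem c h)
    · exact .inr ⟨x, y, infix_cons hxy, h⟩

theorem strictMonoOn_of_isChain {β : Type*} [LinearOrder α] [Preorder β] {f : α → β}
    {l : List α} (hl : l.IsChain (· < ·)) (hf : l.IsChain fun a b => f a < f b) :
    StrictMonoOn f {x | x ∈ l} := by
  let R : α → α → Prop := fun a b => (a < b → f a < f b) ∧ (b < a → f b < f a)
  have : Std.Symm R := ⟨fun _ _ h => h.symm⟩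
  have hR : l.Pairwise R :=
    ((isChain_iff_pairwise.mp hl).and
      (pairwise_map.mp (isChain_iff_pairwise.mp ((isChain_map f).mpr hf)))).imp
      fun h => ⟨fun _ => h.2, fun h' => absurd h' h.1.asymm⟩
  intro a ha b hb hab
  exact (hR.forall ha hb hab.ne).1 hab

end List

theorem isConsecutive_iff_pair_infix {l : List ℚ} (hl : l.Pairwise (· < ·)) {x y : ℚ} :
    IsConsecutive {z | z ∈ l} x y ↔ [x, y] <:+: l := by
  constructor
  · rintro ⟨hx, hy, hxy, hbetween⟩
    induction l with
    | nil => simp at hx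
    | cons a t ih =>
      obtain ⟨ha, ht⟩ := List.pairwise_cons.mp hl
      rcases List.mem_cons.mp hx with rfl | hx
      · obtain ⟨b, t', rfl⟩ : ∃ b t', t = b :: t' := by
          cases t with
          | nil => simp_all
          | cons b t' => exact ⟨b, t', rfl⟩
        have hyb : y = b := by
          rcases List.mem_cons.mp hy with rfl | hy
          · exact absurd hxy (lt_irrefl _)
          rcases List.mem_cons.mp hy with rfl | hy
          · rfl
          exact absurd ⟨ha b List.mem_cons_self, (List.pairwise_cons.mp ht).1 y hy⟩
            (hbetween b (by simp))
        subst hyb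
        exact List.pair_infix_cons_cons_iff.mpr (.inl ⟨rfl, rfl⟩)
      · have hy : y ∈ t := (List.mem_cons.mp hy).resolve_left ((ha x hx).trans hxy).ne'
        exact List.infix_cons (ih ht hx hy fun z hz => hbetween z (List.mem_cons_of_mem a hz))
  · rintro ⟨s, u, rfl⟩
    simp only [List.pairwise_append, List.pairwise_cons] at hl
    refine ⟨by simp, by simp, by grind, fun z hz => ?_⟩
    simp only [List.mem_append, List.mem_cons] at hz
    grind

def IsFareyPair (x y : ℚ) : Prop := y.num * x.den - x.num * y.den = 1

theorem mediant_eq_div (x y : ℚ) :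
    mediant x y = ((x.num + y.num : ℤ) : ℚ) / ((x.den + y.den : ℤ) : ℚ) := by
  unfold mediant
  push_cast
  rfl

namespace IsFareyPair

variable {x y : ℚ}

theorem lt (h : IsFareyPair x y) : x < y := by
  rw [Rat.lt_iff]
  unfold IsFareyPair at h
  omega

theorem isCoprime_num_add_num (h : IsFareyPair x y) :
    IsCoprime (x.num + y.num) (x.den + y.den : ℤ) :=
  ⟨-y.den, y.num, by unfold IsFareyPair at h; linear_combination h⟩

theorem num_mediant (h : IsFareyPair x y) : (mediant x y).num = x.num + y.num := by
  rw [mediant_eq_div]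
  exact Rat.num_div_eq_of_coprime (by positivity)
    (Int.isCoprime_iff_gcd_eq_one.mp h.isCoprime_num_add_num)

theorem den_mediant (h : IsFareyPair x y) : (mediant x y).den = x.den + y.den := by
  have : ((mediant x y).den : ℤ) = x.den + y.den := by
    rw [mediant_eq_div]
    exact Rat.den_div_eq_of_coprime (by positivity)
      (Int.isCoprime_iff_gcd_eq_one.mp h.isCoprime_num_add_num)
  exact_mod_cast this

theorem mediant_left (h : IsFareyPair x y) : IsFareyPair x (mediant x y) := by
  rw [IsFareyPair, h.num_mediant, h.den_mediant]
  unfold IsFareyPair at h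
  push_cast
  linear_combination h

theorem mediant_right (h : IsFareyPair x y) : IsFareyPair (mediant x y) y := by
  rw [IsFareyPair, h.num_mediant, h.den_mediant]
  unfold IsFareyPair at h
  push_cast
  linear_combination h

theorem den_add_den_le {q : ℚ} (h : IsFareyPair x y) (hxq : x < q) (hqy : q < y) :
    x.den + y.den ≤ q.den := by
  rw [Rat.lt_iff] at hxq hqy
  have hqy' : 1 ≤ y.num * q.den - q.num * y.den := by omega
  have hxq' : 1 ≤ q.num * x.den - x.num * q.den := by omega
  have key : (x.den + y.den : ℤ) ≤ q.den := calc
    (x.den + y.den : ℤ) ≤ x.den * (y.num * q.den - q.num * y.den)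
        + y.den * (q.num * x.den - x.num * q.den) :=
      add_le_add (le_mul_of_one_le_right (by positivity) hqy')
        (le_mul_of_one_le_right (by positivity) hxq')
    _ = q.den := by unfold IsFareyPair at h; linear_combination q.den * h
  exact_mod_cast key

end IsFareyPair

def sternBrocotList : ℕ → List ℚ
  | 0 => [0, 1]
  | n + 1 => (sternBrocotList n).insertBetween mediant

namespace sternBrocotList

theorem head?_eq : ∀ n, (sternBrocotList n).head? = some 0
  | 0 => rfl
  | n + 1 => (List.head?_insertBetween _ _).trans (head?_eq n)

theorem getLast?_eq : ∀ n, (sternBrocotList n).getLast? = some 1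
  | 0 => rfl
  | n + 1 => (List.getLast?_insertBetween _ _).trans (getLast?_eq n)

theorem isChain_isFareyPair : ∀ n, (sternBrocotList n).IsChain IsFareyPair
  | 0 => List.isChain_pair.mpr (by norm_num [IsFareyPair])
  | n + 1 => List.isChain_insertBetween _ fun _ _ hxy =>
      have h := (isChain_isFareyPair n).rel_of_infix hxy
      ⟨h.mediant_left, h.mediant_right⟩

theorem pairwise_lt (n : ℕ) : (sternBrocotList n).Pairwise (· < ·) :=
  List.isChain_iff_pairwise.mp ((isChain_isFareyPair n).imp fun _ _ h => h.lt)

theorem mem_Icc_of_mem : ∀ n, ∀ q ∈ sternBrocotList n, q ∈ Icc (0 : ℚ) 1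
  | 0, q, hq => by rcases List.mem_pair.mp hq with rfl | rfl <;> norm_num
  | n + 1, q, hq => by
    rcases (List.mem_insertBetween _).mp hq with hq | ⟨x, y, hxy, rfl⟩
    · exact mem_Icc_of_mem n q hq
    have h := (isChain_isFareyPair n).rel_of_infix hxy
    have hx := mem_Icc_of_mem n x (hxy.subset (by simp))
    have hy := mem_Icc_of_mem n y (hxy.subset (by simp))
    exact ⟨hx.1.trans h.mediant_left.lt.le, h.mediant_right.lt.le.trans hy.2⟩

theorem sternBrocot_eq : ∀ n, sternBrocot n = {z | z ∈ sternBrocotList n}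
  | 0 => by ext; simp [sternBrocot, sternBrocotList]
  | n + 1 => by
    ext z
    simp only [sternBrocot, sternBrocotList, List.mem_insertBetween, sternBrocot_eq n,
      isConsecutive_iff_pair_infix (pairwise_lt n)]
    rfl

theorem isConsecutive_of_pair_infix {n : ℕ} {x y : ℚ} (hxy : [x, y] <:+: sternBrocotList n) :
    IsConsecutive (sternBrocot n) x y := by
  rwa [sternBrocot_eq, isConsecutive_iff_pair_infix (pairwise_lt n)]

theorem isChain_den_add_den : ∀ n,
    (sternBrocotList n).IsChain fun x y => n + 2 ≤ x.den + y.den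
  | 0 => List.isChain_pair.mpr (by decide)
  | n + 1 => List.isChain_insertBetween _ fun x y hxy => by
      have hle := (isChain_den_add_den n).rel_of_infix hxy
      rw [((isChain_isFareyPair n).rel_of_infix hxy).den_mediant]
      have := x.pos
      have := y.pos
      omega

theorem mem_of_den_le {q : ℚ} (hq : q ∈ Icc (0 : ℚ) 1) {n : ℕ} (hn : q.den ≤ n + 1) :
    q ∈ sternBrocotList n := by
  refine (List.mem_or_exists_infix_lt_lt (head?_eq n) (getLast?_eq n) hq.1 hq.2).resolve_right ?_
  rintro ⟨x, y, hxy, hxq, hqy⟩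
  have hden := ((isChain_isFareyPair n).rel_of_infix hxy).den_add_den_le hxq hqy
  have := (isChain_den_add_den n).rel_of_infix hxy
  omega

end sternBrocotList

structure IsTichyUitz (lam : ℝ) (g : ℚ → ℝ) : Prop where
  map_zero : g 0 = 0
  map_one : g 1 = 1
  map_mediant : ∀ n x y, IsConsecutive (sternBrocot n) x y →
    g (mediant x y) = g x + lam * (g y - g x)

namespace IsTichyUitz

variable {lam : ℝ} {g : ℚ → ℝ}

theorem isChain_sternBrocotList_gaps (hg : IsTichyUitz lam g) (hlam : lam ∈ Ioo (0 : ℝ) 1) :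
    ∀ n, (sternBrocotList n).IsChain fun x y =>
      0 < g y - g x ∧ g y - g x ≤ max lam (1 - lam) ^ n
  | 0 => List.isChain_pair.mpr (by simp [hg.map_zero, hg.map_one])
  | n + 1 => List.isChain_insertBetween _ fun x y hxy => by
      obtain ⟨hpos, hle⟩ := (hg.isChain_sternBrocotList_gaps hlam n).rel_of_infix hxy
      rw [hg.map_mediant n x y (sternBrocotList.isConsecutive_of_pair_infix hxy), pow_succ']
      have hc : 0 ≤ max lam (1 - lam) := hlam.1.le.trans (le_max_left _ _)
      have hl := mul_le_mul (le_max_left lam (1 - lam)) hle hpos.le hc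
      have hr := mul_le_mul (le_max_right lam (1 - lam)) hle hpos.le hc
      obtain ⟨h0, h1⟩ := hlam
      refine ⟨⟨?_, ?_⟩, ?_, ?_⟩ <;> nlinarith

theorem strictMonoOn (hg : IsTichyUitz lam g) (hlam : lam ∈ Ioo (0 : ℝ) 1) :
    StrictMonoOn g (Icc 0 1) := by
  intro p hp q hq hpq
  let n := max p.den q.den
  exact List.strictMonoOn_of_isChain
    ((sternBrocotList.isChain_isFareyPair n).imp fun _ _ h => h.lt)
    ((hg.isChain_sternBrocotList_gaps hlam n).imp fun _ _ h => sub_pos.mp h.1)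
    (sternBrocotList.mem_of_den_le hp (Nat.le_succ_of_le (le_max_left _ _)))
    (sternBrocotList.mem_of_den_le hq (Nat.le_succ_of_le (le_max_right _ _))) hpq

theorem exists_abs_sub_le (hg : IsTichyUitz lam g) (hlam : lam ∈ Ioo (0 : ℝ) 1) (n : ℕ)
    {t : ℝ} (ht : t ∈ Icc (0 : ℝ) 1) :
    ∃ q ∈ Icc (0 : ℚ) 1, |g q - t| ≤ max lam (1 - lam) ^ n := by
  have hgaps := (List.isChain_map (R := fun a b => 0 < b - a ∧ b - a ≤ max lam (1 - lam) ^ n)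
    g).mpr (hg.isChain_sternBrocotList_gaps hlam n)
  have hhead : ((sternBrocotList n).map g).head? = some 0 := by
    simp [sternBrocotList.head?_eq, hg.map_zero]
  have hlast : ((sternBrocotList n).map g).getLast? = some 1 := by
    simp [sternBrocotList.getLast?_eq, hg.map_one]
  rcases List.mem_or_exists_infix_lt_lt hhead hlast ht.1 ht.2 with ht' | ⟨u, v, huv, hut, htv⟩
  · obtain ⟨q, hq, rfl⟩ := List.mem_map.mp ht'
    refine ⟨q, sternBrocotList.mem_Icc_of_mem n q hq, ?_⟩
    simpa using pow_nonneg (hlam.1.le.trans (le_max_left _ (1 - lam))) n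
  · obtain ⟨q, hq, rfl⟩ := List.mem_map.mp (huv.subset List.mem_cons_self)
    refine ⟨q, sternBrocotList.mem_Icc_of_mem n q hq, ?_⟩
    rw [abs_sub_comm, abs_of_pos (sub_pos.mpr hut)]
    linarith [(hgaps.rel_of_infix huv).2]

theorem exists_abs_sub_lt (hg : IsTichyUitz lam g) (hlam : lam ∈ Ioo (0 : ℝ) 1)
    {t : ℝ} (ht : t ∈ Icc (0 : ℝ) 1) {ε : ℝ} (hε : 0 < ε) :
    ∃ q ∈ Icc (0 : ℚ) 1, |g q - t| < ε := by
  have hc : max lam (1 - lam) < 1 := max_lt hlam.2 (by linarith [hlam.1])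
  obtain ⟨n, hn⟩ := exists_pow_lt_of_lt_one hε hc
  obtain ⟨q, hq, hqt⟩ := hg.exists_abs_sub_le hlam n ht
  exact ⟨q, hq, hqt.trans_lt hn⟩

end IsTichyUitz

theorem dense_setOf_ratCast_Icc :
    Dense {x : Icc (0 : ℝ) 1 | ∃ q : ℚ, (q : ℝ) = x} := by
  refine Subtype.dense_iff.mpr ?_
  have hIoo : Ioo (0 : ℝ) 1 ⊆ closure (Ioo 0 1 ∩ range ((↑) : ℚ → ℝ)) :=
    Rat.denseRange_cast.open_subset_closure_inter isOpen_Ioo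
  calc Icc (0 : ℝ) 1 = closure (Ioo 0 1) := (closure_Ioo zero_ne_one).symm
    _ ⊆ closure (Ioo 0 1 ∩ range ((↑) : ℚ → ℝ)) := closure_minimal hIoo isClosed_closure
    _ ⊆ closure ((↑) '' {x : Icc (0 : ℝ) 1 | ∃ q : ℚ, (q : ℝ) = x}) :=
      closure_mono fun x ⟨hx, q, hq⟩ => ⟨⟨x, Ioo_subset_Icc_self hx⟩, ⟨q, hq⟩, rfl⟩

theorem funext_Icc_of_ratCast {G H : Icc (0 : ℝ) 1 → ℝ} (hG : Continuous G) (hH : Continuous H)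
    (h : ∀ (q : ℚ) (hq : (q : ℝ) ∈ Icc (0 : ℝ) 1), G ⟨q, hq⟩ = H ⟨q, hq⟩) : G = H :=
  Continuous.ext_on dense_setOf_ratCast_Icc hG hH fun ⟨_, hx⟩ ⟨q, hq⟩ => by subst hq; exact h q hx

theorem ratCast_mem_Icc_iff {q : ℚ} : (q : ℝ) ∈ Icc (0 : ℝ) 1 ↔ q ∈ Icc (0 : ℚ) 1 := by
  simp only [mem_Icc]
  norm_cast

noncomputable def ratSupExtension (g : ℚ → ℝ) (x : ℝ) : ℝ :=
  sSup (g '' {q : ℚ | q ∈ Icc 0 1 ∧ (q : ℝ) ≤ x})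

namespace ratSupExtension

variable {g : ℚ → ℝ}

theorem bddAbove (hg : MonotoneOn g (Icc 0 1)) (x : ℝ) :
    BddAbove (g '' {q : ℚ | q ∈ Icc 0 1 ∧ (q : ℝ) ≤ x}) :=
  ⟨g 1, fun _ ⟨_, ⟨hq, _⟩, hgq⟩ => hgq ▸ hg hq (right_mem_Icc.mpr zero_le_one) hq.2⟩

theorem image_nonempty {x : ℝ} (hx : 0 ≤ x) :
    (g '' {q : ℚ | q ∈ Icc 0 1 ∧ (q : ℝ) ≤ x}).Nonempty :=
  ⟨g 0, mem_image_of_mem g ⟨left_mem_Icc.mpr zero_le_one, by simpa using hx⟩⟩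

theorem apply_ratCast (hg : MonotoneOn g (Icc 0 1)) {q : ℚ} (hq : q ∈ Icc 0 1) :
    ratSupExtension g q = g q :=
  le_antisymm
    (csSup_le (image_nonempty (by exact_mod_cast hq.1)) fun _ ⟨_, ⟨hp, hpq⟩, hgp⟩ =>
      hgp ▸ hg hp hq (by exact_mod_cast hpq))
    (le_csSup (bddAbove hg q) ⟨q, ⟨hq, le_rfl⟩, rfl⟩)

theorem monotoneOn (hg : MonotoneOn g (Icc 0 1)) : MonotoneOn (ratSupExtension g) (Ici 0) :=
  fun _ hx _ _ hxy => csSup_le_csSup (bddAbove hg _) (image_nonempty hx)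
    (image_mono fun _ ⟨hq, hqx⟩ => ⟨hq, hqx.trans hxy⟩)

end ratSupExtension

theorem exists_unique_continuous_monotone_extension {g : ℚ → ℝ} (hmono : MonotoneOn g (Icc 0 1))
    (hg0 : g 0 = 0) (hg1 : g 1 = 1)
    (hdense : ∀ t ∈ Icc (0 : ℝ) 1, ∀ ε > 0, ∃ q ∈ Icc (0 : ℚ) 1, |g q - t| < ε) :
    ∃! G : Icc (0 : ℝ) 1 → ℝ, Continuous G ∧ Monotone G ∧
      (∀ (q : ℚ) (hq : (q : ℝ) ∈ Icc (0 : ℝ) 1), G ⟨q, hq⟩ = g q) ∧ range G = Icc 0 1 := by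
  set G : Icc (0 : ℝ) 1 → ℝ := fun x => ratSupExtension g x
  have hGq (q : ℚ) (hq : (q : ℝ) ∈ Icc (0 : ℝ) 1) : G ⟨q, hq⟩ = g q :=
    ratSupExtension.apply_ratCast hmono (ratCast_mem_Icc_iff.mp hq)
  have hGmono : Monotone G := fun x y hxy =>
    ratSupExtension.monotoneOn hmono x.2.1 y.2.1 hxy
  have hG0 : G 0 = 0 := by simpa [hg0] using hGq 0 (by simp)
  have hG1 : G 1 = 1 := by simpa [hg1] using hGq 1 (by simp)
  have hGmem (x : Icc (0 : ℝ) 1) : G x ∈ Icc (0 : ℝ) 1 :=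
    ⟨hG0 ▸ hGmono x.2.1, hG1 ▸ hGmono x.2.2⟩
  have hGcont : Continuous G := by
    let G' : Icc (0 : ℝ) 1 → Icc (0 : ℝ) 1 := fun x => ⟨G x, hGmem x⟩
    have hdenseRange : DenseRange G' := Metric.denseRange_iff.mpr fun t ε hε => by
      obtain ⟨q, hq, hqt⟩ := hdense t t.2 ε hε
      have hq' : (q : ℝ) ∈ Icc (0 : ℝ) 1 := ratCast_mem_Icc_iff.mpr hq
      refine ⟨⟨q, hq'⟩, ?_⟩
      rw [Subtype.dist_eq, Real.dist_eq, abs_sub_comm]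
      simpa [G', hGq q hq'] using hqt
    exact continuous_subtype_val.comp
      (Monotone.continuous_of_denseRange (f := G') hGmono hdenseRange)
  have hrange : range G = Icc 0 1 := by
    refine (range_subset_iff.mpr hGmem).antisymm ?_
    simpa [hG0, hG1] using intermediate_value_univ 0 1 hGcont
  refine ⟨G, ⟨hGcont, hGmono, hGq, hrange⟩, fun H ⟨hHcont, _, hHq, _⟩ => ?_⟩
  exact funext_Icc_of_ratCast hHcont hGcont fun q hq => (hHq q hq).trans (hGq q hq).symm

/-- `g_λ` is strictly increasing on `ℚ ∩ [0,1]` and extends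
uniquely to a continuous increasing function from `[0,1]` onto `[0,1]`. -/
theorem tichyUitz_strictMono_and_unique_extension
    (lam : ℝ) (hlam : lam ∈ Set.Ioo (0 : ℝ) 1)
    (g : ℚ → ℝ)
    (hg0 : g 0 = 0) (hg1 : g 1 = 1)
    (hrec : ∀ n : ℕ, ∀ x y : ℚ, IsConsecutive (sternBrocot n) x y →
      g (mediant x y) = g x + lam * (g y - g x)) :
    StrictMonoOn g (Set.Icc (0 : ℚ) 1) ∧
      ∃! G : Set.Icc (0 : ℝ) 1 → ℝ,
        Continuous G ∧ Monotone G ∧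
          (∀ (q : ℚ) (hq : (q : ℝ) ∈ Set.Icc (0 : ℝ) 1), G ⟨(q : ℝ), hq⟩ = g q) ∧
          Set.range G = Set.Icc (0 : ℝ) 1 := by
  have hg : IsTichyUitz lam g := ⟨hg0, hg1, hrec⟩
  have hmono := hg.strictMonoOn hlam
  exact ⟨hmono, exists_unique_continuous_monotone_extension hmono.monotoneOn hg0 hg1
    fun _ ht _ hε => hg.exists_abs_sub_lt hlam ht hε⟩
end
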